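/- (Congruity of the r-csmGmm on same-signed vectors.) Under any r-csmGmm, if z, z' ∈ ℝ^K have all coordinates positive and z_k ≥ z'_k for every k, then lfdr^rep(z) ≤ lfdr^rep(z'); likewise, if z, z' have all coordinates negative and z_k ≤ z'_k for every k, then lfdr^rep(z) ≤ lfdr^rep(z'). In other words, among vectors whose coordinates all share a common sign, a componentwise more extreme vector never receives a strictly larger replication local false discovery rate. -/

import Mathlib

noncomputable section

open Finset

/-- The standard normal density `φ(x) = (2π)^{-1/2} exp(-x²/2)`. -/
def stdNormal (x : ℝ) : ℝ := (Real.sqrt (2 * Real.pi))⁻¹ * Real.exp (-(x ^ 2) / 2)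

/-- Sign value encoded by a ternary digit: `0 ↦ -1`, `1 ↦ 0`, `2 ↦ 1`. -/
def sgnVal (i : Fin 3) : ℝ := (i : ℝ) - 1

/-- The non-null pattern (binary representation) of an association configuration:
`pat h k = true` iff dimension `k` is non-null. -/
def pat {K : ℕ} (h : Fin K → Fin 3) : Fin K → Bool := fun k => h k != 1

/-- A conditionally symmetric multidimensional Gaussian mixture model (csmGmm).
Parameters are indexed by the non-null pattern `β : Fin K → Bool`, which is
equivalent to the binary representation `b ∈ {0,…,2^K - 1}`; the all-`true`
pattern corresponds to `b = 2^K - 1`. -/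
structure CsmGmm (K : ℕ) where
  /-- number of mean-magnitude vectors for each binary representation -/
  M : (Fin K → Bool) → ℕ
  M_pos : ∀ β, 1 ≤ M β
  /-- mixing proportions, shared by configurations with the same binary representation -/
  pi : (β : Fin K → Bool) → Fin (M β) → ℝ
  pi_pos : ∀ β m, 0 < pi β m
  pi_sum : ∑ h : Fin K → Fin 3, ∑ m : Fin (M (pat h)), pi (pat h) m = 1
  /-- mean magnitudes -/
  mu : (β : Fin K → Bool) → Fin (M β) → Fin K → ℝ
  mu_null : ∀ β m k, β k = false → mu β m k = 0
  mu_pos : ∀ β m k, β k = true → 0 < mu β m k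
  mu_alt : ∀ β (m' : Fin (M β)) (m : Fin (M (fun _ => true))) k,
    β ≠ (fun _ => true) → β k = true → mu β m' k ≤ mu (fun _ => true) m k

namespace CsmGmm

variable {K : ℕ}

/-- The numerator `N(z)`: mixture mass over composite-null configurations
(those with at least one null dimension, i.e. some `h k = 0`, encoded by digit `1`). -/
def N (G : CsmGmm K) (z : Fin K → ℝ) : ℝ :=
  ∑ h ∈ Finset.univ.filter (fun h : Fin K → Fin 3 => ∃ k, h k = 1),
    ∑ m : Fin (G.M (pat h)),
      G.pi (pat h) m * ∏ k, stdNormal (z k - sgnVal (h k) * G.mu (pat h) m k)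

/-- The denominator `D(z)`: the full mixture density. -/
def D (G : CsmGmm K) (z : Fin K → ℝ) : ℝ :=
  ∑ h : Fin K → Fin 3,
    ∑ m : Fin (G.M (pat h)),
      G.pi (pat h) m * ∏ k, stdNormal (z k - sgnVal (h k) * G.mu (pat h) m k)

/-- The local false discovery rate `lfdr(z) = N(z)/D(z)`. -/
def lfdr (G : CsmGmm K) (z : Fin K → ℝ) : ℝ := G.N z / G.D z

end CsmGmm

end

noncomputable section

namespace CsmGmm

variable {K : ℕ}

/-- The replication numerator `N^rep(z)`: mixture mass over the replication null
space `H₀^rep = {-1,0,1}^K \ {(1,…,1), (-1,…,-1)}` (digit `2` encodes `1` and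
digit `0` encodes `-1`). -/
def Nrep (G : CsmGmm K) (z : Fin K → ℝ) : ℝ :=
  ∑ h ∈ Finset.univ.filter
      (fun h : Fin K → Fin 3 => h ≠ (fun _ => 2) ∧ h ≠ (fun _ => 0)),
    ∑ m : Fin (G.M (pat h)),
      G.pi (pat h) m * ∏ k, stdNormal (z k - sgnVal (h k) * G.mu (pat h) m k)

/-- The replication local false discovery rate `lfdr^rep(z) = N^rep(z)/D(z)`. -/
def lfdrRep (G : CsmGmm K) (z : Fin K → ℝ) : ℝ := G.Nrep z / G.D z

end CsmGmm

end

/-!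
Split `D = N^rep + A`, where `A` is the mass of the two replication-alternative configurations;
since `M_{2^K-1} = 1`, `A(z) = π̄ (φ(z - μ̄) + φ(z + μ̄))`. As `lfdr^rep = N^rep / (N^rep + A)`, it
suffices that `N^rep(z) A(z') ≤ N^rep(z') A(z)`. Pairing every null configuration `h` with `-h`
writes `2 N^rep` as a positive combination of `φ(z - c) + φ(z + c) = 2 φ(z) e^{-|c|²/2} cosh (c·z)`
with `|c_k| ≤ μ̄_k`, so everything reduces to `cosh (c·z) cosh (μ̄·z') ≤ cosh (c·z') cosh (μ̄·z)`.
For `0 ≤ z' ≤ z` this follows from `|c·z'| ≤ μ̄·z'` and `|c·(z - z')| ≤ μ̄·(z - z')`; the negative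
case follows by the symmetry `z ↦ -z`.
-/

open Real

section SymmetricGaussian

variable {ι : Type*} [Fintype ι]

lemma stdNormal_pos (x : ℝ) : 0 < stdNormal x := by
  unfold stdNormal; positivity

lemma stdNormal_sub (x c : ℝ) : stdNormal (x - c) = stdNormal x * exp (c * x - c ^ 2 / 2) := by
  rw [stdNormal, stdNormal, mul_assoc, ← exp_add]
  ring_nf

lemma prod_stdNormal_sub (c w : ι → ℝ) :
    ∏ k, stdNormal (w k - c k) = (∏ k, stdNormal (w k)) * exp (c ⬝ᵥ w - ∑ k, c k ^ 2 / 2) := by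
  rw [dotProduct, ← Finset.sum_sub_distrib, exp_sum, ← Finset.prod_mul_distrib]
  exact Finset.prod_congr rfl fun k _ => stdNormal_sub _ _

/-- Density of the equal mixture of `N(c, I)` and `N(-c, I)`, up to a factor `2`. -/
noncomputable def symmGauss (c w : ι → ℝ) : ℝ :=
  ∏ k, stdNormal (w k - c k) + ∏ k, stdNormal (w k + c k)

lemma symmGauss_eq (c w : ι → ℝ) :
    symmGauss c w = (∏ k, stdNormal (w k)) * exp (-∑ k, c k ^ 2 / 2) * (2 * cosh (c ⬝ᵥ w)) := by
  have hneg : ∏ k, stdNormal (w k + c k) = ∏ k, stdNormal (w k - (-c) k) := by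
    simp only [Pi.neg_apply, sub_neg_eq_add]
  rw [symmGauss, hneg, prod_stdNormal_sub, prod_stdNormal_sub, neg_dotProduct, cosh_eq]
  simp only [Pi.neg_apply, neg_sq, sub_eq_add_neg, exp_add]
  ring

lemma symmGauss_pos (c w : ι → ℝ) : 0 < symmGauss c w :=
  add_pos (Finset.prod_pos fun _ _ => stdNormal_pos _) (Finset.prod_pos fun _ _ => stdNormal_pos _)

lemma symmGauss_neg_right (c w : ι → ℝ) : symmGauss c (-w) = symmGauss c w := by
  rw [symmGauss_eq, symmGauss_eq, dotProduct_neg, cosh_neg]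
  simp only [Pi.neg_apply, stdNormal, neg_sq]

/-- `2 cosh x cosh y = cosh (x + y) + cosh (x - y)` turns this into two comparisons of `|·|`. -/
lemma cosh_mul_cosh_le {a a' v v' : ℝ} (h₁ : |a'| ≤ v') (h₂ : |a - a'| ≤ v - v') :
    cosh a * cosh v' ≤ cosh a' * cosh v := by
  rw [abs_le] at h₁ h₂
  have hplus : cosh (a + v') ≤ cosh (a' + v) := by
    rw [cosh_le_cosh, abs_le, abs_of_nonneg (by linarith)]
    constructor <;> linarith
  have hminus : cosh (a - v') ≤ cosh (a' - v) := by
    rw [cosh_le_cosh, abs_le, abs_of_nonpos (by linarith)]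
    constructor <;> linarith
  have hprod : ∀ x y, 2 * (cosh x * cosh y) = cosh (x + y) + cosh (x - y) := fun x y => by
    rw [cosh_add, cosh_sub]; ring
  linarith [hprod a v', hprod a' v]

lemma abs_dotProduct_le {c d x : ι → ℝ} (hcd : ∀ k, |c k| ≤ d k) (hx : ∀ k, 0 ≤ x k) :
    |c ⬝ᵥ x| ≤ d ⬝ᵥ x := by
  refine (Finset.abs_sum_le_sum_abs _ _).trans (Finset.sum_le_sum fun k _ => ?_)
  rw [abs_mul, abs_of_nonneg (hx k)]
  exact mul_le_mul_of_nonneg_right (hcd k) (hx k)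

lemma symmGauss_mul_le_of_nonneg {c d w w' : ι → ℝ} (hcd : ∀ k, |c k| ≤ d k)
    (hw' : ∀ k, 0 ≤ w' k) (hle : ∀ k, w' k ≤ w k) :
    symmGauss c w * symmGauss d w' ≤ symmGauss c w' * symmGauss d w := by
  have hcosh : cosh (c ⬝ᵥ w) * cosh (d ⬝ᵥ w') ≤ cosh (c ⬝ᵥ w') * cosh (d ⬝ᵥ w) := by
    refine cosh_mul_cosh_le (abs_dotProduct_le hcd hw') ?_
    rw [← dotProduct_sub, ← dotProduct_sub]
    exact abs_dotProduct_le hcd fun k => sub_nonneg.mpr (hle k)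
  have hC : 0 ≤ (∏ k, stdNormal (w k)) * (∏ k, stdNormal (w' k)) *
      exp (-∑ k, c k ^ 2 / 2) * exp (-∑ k, d k ^ 2 / 2) := by
    have := Finset.prod_pos fun k (_ : k ∈ Finset.univ) => stdNormal_pos (w k)
    have := Finset.prod_pos fun k (_ : k ∈ Finset.univ) => stdNormal_pos (w' k)
    positivity
  simp only [symmGauss_eq]
  linarith [mul_le_mul_of_nonneg_left hcosh hC]

lemma symmGauss_mul_le_of_nonpos {c d w w' : ι → ℝ} (hcd : ∀ k, |c k| ≤ d k)
    (hw' : ∀ k, w' k ≤ 0) (hle : ∀ k, w k ≤ w' k) :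
    symmGauss c w * symmGauss d w' ≤ symmGauss c w' * symmGauss d w := by
  simpa only [symmGauss_neg_right] using symmGauss_mul_le_of_nonneg (w := -w) (w' := -w') hcd
    (fun k => neg_nonneg.mpr (hw' k)) (fun k => neg_le_neg (hle k))

end SymmetricGaussian

lemma div_add_le_div_add {n n' a a' : ℝ} (hn : 0 ≤ n) (hn' : 0 ≤ n') (ha : 0 < a) (ha' : 0 < a')
    (h : n * a' ≤ n' * a) : n / (n + a) ≤ n' / (n' + a') := by
  rw [div_le_div_iff₀ (by positivity) (by positivity)]
  linarith

-- In the digit encoding of `sgnVal`, `Fin.rev` is negation of a configuration.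
lemma sgnVal_rev (i : Fin 3) : sgnVal i.rev = -sgnVal i := by
  fin_cases i <;> norm_num [sgnVal]

lemma abs_sgnVal_le_one (i : Fin 3) : |sgnVal i| ≤ 1 := by
  fin_cases i <;> norm_num [sgnVal]

lemma pat_rev_comp {K : ℕ} (h : Fin K → Fin 3) : pat (Fin.rev ∘ h) = pat h := by
  funext k
  change ((h k).rev != 1) = (h k != 1)
  generalize h k = i
  fin_cases i <;> rfl

def replicationNull (K : ℕ) : Finset (Fin K → Fin 3) :=
  Finset.univ.filter (fun h : Fin K → Fin 3 => h ≠ (fun _ => 2) ∧ h ≠ (fun _ => 0))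

lemma rev_comp_mem_replicationNull {K : ℕ} {h : Fin K → Fin 3} (hh : h ∈ replicationNull K) :
    Fin.rev ∘ h ∈ replicationNull K := by
  have hconst : ∀ a : Fin 3, Fin.rev ∘ h = (fun _ => a) → h = fun _ => a.rev := fun a e => by
    simpa only [funext_iff, Function.comp_apply, Fin.rev_eq_iff] using e
  simp only [replicationNull, Finset.mem_filter, Finset.mem_univ, true_and] at hh ⊢
  exact ⟨fun e => hh.2 (hconst 2 e), fun e => hh.1 (hconst 0 e)⟩

namespace CsmGmm

variable {K : ℕ}

noncomputable def configDensity (G : CsmGmm K) (h : Fin K → Fin 3) (z : Fin K → ℝ) : ℝ :=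
  ∑ m : Fin (G.M (pat h)),
    G.pi (pat h) m * ∏ k, stdNormal (z k - sgnVal (h k) * G.mu (pat h) m k)

lemma Nrep_eq_sum (G : CsmGmm K) (z : Fin K → ℝ) :
    G.Nrep z = ∑ h ∈ replicationNull K, G.configDensity h z := rfl

lemma D_eq_sum (G : CsmGmm K) (z : Fin K → ℝ) :
    G.D z = ∑ h, G.configDensity h z := rfl

lemma configDensity_add_rev_comp (G : CsmGmm K) (h : Fin K → Fin 3) (z : Fin K → ℝ) :
    G.configDensity h z + G.configDensity (Fin.rev ∘ h) z =
      ∑ m : Fin (G.M (pat h)),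
        G.pi (pat h) m * symmGauss (fun k => sgnVal (h k) * G.mu (pat h) m k) z := by
  rw [configDensity, configDensity, pat_rev_comp, ← Finset.sum_add_distrib]
  refine Finset.sum_congr rfl fun m _ => ?_
  simp only [symmGauss, Function.comp_apply, sgnVal_rev, neg_mul, sub_neg_eq_add, mul_add]


lemma two_mul_Nrep (G : CsmGmm K) (z : Fin K → ℝ) :
    2 * G.Nrep z = ∑ h ∈ replicationNull K, ∑ m : Fin (G.M (pat h)),
      G.pi (pat h) m * symmGauss (fun k => sgnVal (h k) * G.mu (pat h) m k) z := by
  have hflip : ∑ h ∈ replicationNull K, G.configDensity (Fin.rev ∘ h) z = G.Nrep z :=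
    Finset.sum_nbij' (Fin.rev ∘ ·) (Fin.rev ∘ ·)
      (fun _ hh => rev_comp_mem_replicationNull hh) (fun _ hh => rev_comp_mem_replicationNull hh)
      (fun _ _ => funext fun _ => Fin.rev_rev _) (fun _ _ => funext fun _ => Fin.rev_rev _)
      (fun _ _ => rfl)
  rw [two_mul]
  nth_rewrite 2 [← hflip]
  rw [Nrep_eq_sum, ← Finset.sum_add_distrib]
  exact Finset.sum_congr rfl fun h _ => G.configDensity_add_rev_comp h z

lemma subsingleton_fin_M_full {G : CsmGmm K} (hM1 : G.M (fun _ => true) = 1) :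
    Subsingleton (Fin (G.M fun _ => true)) :=
  Fin.subsingleton_iff_le_one.mpr hM1.le

lemma configDensity_two_add_zero (G : CsmGmm K) (hM1 : G.M (fun _ => true) = 1)
    (m₀ : Fin (G.M fun _ => true)) (z : Fin K → ℝ) :
    G.configDensity (fun _ => 2) z + G.configDensity (fun _ => 0) z =
      G.pi (fun _ => true) m₀ * symmGauss (G.mu (fun _ => true) m₀) z := by
  have := subsingleton_fin_M_full hM1
  have hpat : pat (fun _ : Fin K => (2 : Fin 3)) = fun _ => true := rfl
  refine (G.configDensity_add_rev_comp (fun _ => 2) z).trans ?_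
  rw [hpat, Fintype.sum_subsingleton _ m₀]
  norm_num [sgnVal]

lemma D_eq_Nrep_add (hK : 1 ≤ K) (G : CsmGmm K) (hM1 : G.M (fun _ => true) = 1)
    (m₀ : Fin (G.M fun _ => true)) (z : Fin K → ℝ) :
    G.D z = G.Nrep z + G.pi (fun _ => true) m₀ * symmGauss (G.mu (fun _ => true) m₀) z := by
  have hne : (fun _ : Fin K => (2 : Fin 3)) ≠ fun _ => 0 := fun e => by
    simpa using congrFun e ⟨0, hK⟩
  have hcompl : Finset.univ.filter (fun h : Fin K → Fin 3 => ¬(h ≠ (fun _ => 2) ∧ h ≠ (fun _ => 0)))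
      = {fun _ => 2, fun _ => 0} := by
    ext h
    simp only [Finset.mem_filter, Finset.mem_univ, true_and, Finset.mem_insert,
      Finset.mem_singleton, not_and_or, not_not]
  rw [D_eq_sum, Nrep_eq_sum, replicationNull, ← Finset.sum_filter_add_sum_filter_not Finset.univ
    (fun h : Fin K → Fin 3 => h ≠ (fun _ => 2) ∧ h ≠ (fun _ => 0)), hcompl,
    Finset.sum_pair hne, G.configDensity_two_add_zero hM1 m₀]

lemma mu_nonneg (G : CsmGmm K) (β : Fin K → Bool) (m : Fin (G.M β)) (k : Fin K) :
    0 ≤ G.mu β m k := by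
  by_cases hk : β k = true
  · exact (G.mu_pos β m k hk).le
  · rw [G.mu_null β m k (by simpa using hk)]

lemma mu_le_mu_full (G : CsmGmm K) (hM1 : G.M (fun _ => true) = 1)
    (β : Fin K → Bool) (m : Fin (G.M β)) (m₀ : Fin (G.M fun _ => true)) (k : Fin K) :
    G.mu β m k ≤ G.mu (fun _ => true) m₀ k := by
  have := subsingleton_fin_M_full hM1
  by_cases hβ : β = fun _ => true
  · subst hβ
    rw [Subsingleton.elim m m₀]
  by_cases hk : β k = true
  · exact G.mu_alt β m m₀ k hβ hk
  · rw [G.mu_null β m k (by simpa using hk)]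
    exact G.mu_nonneg _ m₀ k

lemma abs_sgnVal_mul_mu_le (G : CsmGmm K) (hM1 : G.M (fun _ => true) = 1)
    (h : Fin K → Fin 3) (m : Fin (G.M (pat h))) (m₀ : Fin (G.M fun _ => true)) (k : Fin K) :
    |sgnVal (h k) * G.mu (pat h) m k| ≤ G.mu (fun _ => true) m₀ k := by
  rw [abs_mul, abs_of_nonneg (G.mu_nonneg _ m k)]
  exact (mul_le_of_le_one_left (G.mu_nonneg _ m k) (abs_sgnVal_le_one _)).trans
    (G.mu_le_mu_full hM1 _ m m₀ k)

lemma Nrep_nonneg (G : CsmGmm K) (z : Fin K → ℝ) : 0 ≤ G.Nrep z :=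
  Finset.sum_nonneg fun _ _ => Finset.sum_nonneg fun m _ =>
    mul_nonneg (G.pi_pos _ m).le (Finset.prod_nonneg fun _ _ => (stdNormal_pos _).le)

lemma Nrep_mul_symmGauss_le (G : CsmGmm K) (hM1 : G.M (fun _ => true) = 1)
    (m₀ : Fin (G.M fun _ => true)) {z z' : Fin K → ℝ}
    (hpair : ∀ c, (∀ k, |c k| ≤ G.mu (fun _ => true) m₀ k) →
      symmGauss c z * symmGauss (G.mu (fun _ => true) m₀) z' ≤
        symmGauss c z' * symmGauss (G.mu (fun _ => true) m₀) z) :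
    G.Nrep z * symmGauss (G.mu (fun _ => true) m₀) z' ≤
      G.Nrep z' * symmGauss (G.mu (fun _ => true) m₀) z := by
  suffices 2 * G.Nrep z * symmGauss (G.mu (fun _ => true) m₀) z' ≤
      2 * G.Nrep z' * symmGauss (G.mu (fun _ => true) m₀) z by linarith
  rw [two_mul_Nrep, two_mul_Nrep, Finset.sum_mul, Finset.sum_mul]
  refine Finset.sum_le_sum fun h _ => ?_
  rw [Finset.sum_mul, Finset.sum_mul]
  refine Finset.sum_le_sum fun m _ => ?_
  rw [mul_assoc, mul_assoc]
  exact mul_le_mul_of_nonneg_left (hpair _ (G.abs_sgnVal_mul_mu_le hM1 h m m₀))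
    (G.pi_pos _ m).le

lemma lfdrRep_le_lfdrRep (hK : 1 ≤ K) (G : CsmGmm K) (hM1 : G.M (fun _ => true) = 1)
    (m₀ : Fin (G.M fun _ => true)) {z z' : Fin K → ℝ}
    (hpair : ∀ c, (∀ k, |c k| ≤ G.mu (fun _ => true) m₀ k) →
      symmGauss c z * symmGauss (G.mu (fun _ => true) m₀) z' ≤
        symmGauss c z' * symmGauss (G.mu (fun _ => true) m₀) z) :
    G.lfdrRep z ≤ G.lfdrRep z' := by
  have hπ := G.pi_pos (fun _ => true) m₀
  rw [lfdrRep, lfdrRep, G.D_eq_Nrep_add hK hM1 m₀, G.D_eq_Nrep_add hK hM1 m₀]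
  refine div_add_le_div_add (G.Nrep_nonneg z) (G.Nrep_nonneg z')
    (mul_pos hπ (symmGauss_pos _ _)) (mul_pos hπ (symmGauss_pos _ _)) ?_
  linarith [mul_le_mul_of_nonneg_left (G.Nrep_mul_symmGauss_le hM1 m₀ hpair) hπ.le]

end CsmGmm

/-- **Congruity of the r-csmGmm on same-signed vectors.** Under any r-csmGmm
(a csmGmm with `M_{2^K-1} = 1`), among vectors whose coordinates all share a
common sign, a componentwise more extreme vector never receives a strictly
larger replication lfdr. -/
theorem rcsmGmm_congruous_same_sign {K : ℕ} (hK : 2 ≤ K) (G : CsmGmm K)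
    (hM1 : G.M (fun _ => true) = 1)
    (z z' : Fin K → ℝ) :
    ((∀ k, 0 < z k) → (∀ k, 0 < z' k) → (∀ k, z' k ≤ z k) →
      G.lfdrRep z ≤ G.lfdrRep z') ∧
    ((∀ k, z k < 0) → (∀ k, z' k < 0) → (∀ k, z k ≤ z' k) →
      G.lfdrRep z ≤ G.lfdrRep z') := by
  let m₀ : Fin (G.M fun _ => true) := ⟨0, G.M_pos _⟩
  refine ⟨fun _ hz' hle => ?_, fun _ hz' hle => ?_⟩
  · exact G.lfdrRep_le_lfdrRep (by omega) hM1 m₀ fun _ hc =>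
      symmGauss_mul_le_of_nonneg hc (fun k => (hz' k).le) hle
  · exact G.lfdrRep_le_lfdrRep (by omega) hM1 m₀ fun _ hc =>
      symmGauss_mul_le_of_nonpos hc (fun k => (hz' k).le) hle
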